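/- For all integers 0 ≤ k ≤ j, the following identity holds in ℚ(q, a): ∑_{h=k}^{j} (−q)^h a^{2h−j} q^{k² − 2jh + (j−h)²} [h; k]_+ [j; h]_+ · (a² q^{2−2j}; q²)_{j−h} / (q²;q²)_{j−h} = (−q)^k a^{2k−j} q^{−4kj + 2k² + j²} [j; k]_+ · (a² q^{2−4j+2k}; q²)_{j−k} / (q²;q²)_{j−k}. (This is the identity expressing that the reduced north–south closure of a top twist applied to the basis web RI[j,k] in the j-colored HOMFLY-PT skein theory equals the stated closed form.) -/

import Mathlib

/-!
Write `h = k + i`, `n = j - k` and `b = a²q^{2-4j+2k}`. Since `[h;k]₊[j;h]₊ = [j;k]₊[n;i]₊` and the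
monomials factor accordingly, the identity reduces to
`(b;q²)ₙ/(q²;q²)ₙ = ∑ᵢ [n;i]₊ (-b)ⁱ q^{i(i-1)} (bq^{2n};q²)_{n-i}/(q²;q²)_{n-i}`.
This is the q-Chu–Vandermonde identity `(xy;q²)ₙ = ∑ᵢ [n;i]₊ yⁱ (x;q²)ᵢ (y;q²)_{n-i}` at
`x = q^{-2n}`, `y = bq^{2n}`, because `(q^{-2n};q²)ᵢ = (-1)ⁱ q^{i(i-1)-2ni} (q²;q²)ₙ/(q²;q²)_{n-i}`.
-/

noncomputable section

open Finset

/-- The field `ℚ(q, a)` of rational functions in two variables. -/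
abbrev F : Type := FractionRing (MvPolynomial (Fin 2) ℚ)

/-- The variable `q`. -/
def q : F := algebraMap (MvPolynomial (Fin 2) ℚ) F (MvPolynomial.X 0)

/-- The variable `a`. -/
def a : F := algebraMap (MvPolynomial (Fin 2) ℚ) F (MvPolynomial.X 1)

/-- The q-Pochhammer symbol `(x; y)_n = ∏_{j=0}^{n-1} (1 - x yʲ)`. -/
def qPoch (x y : F) (n : ℕ) : F := ∏ i ∈ Finset.range n, (1 - x * y ^ i)

/-- `(q²;q²)_m = ∏_{i=1}^{m} (1 - q^{2i})`. -/
def qp (m : ℕ) : F := qPoch (q ^ 2) (q ^ 2) m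

/-- The positive quantum binomial coefficient `[N; k]₊`. -/
def qbin (N k : ℕ) : F := qp N / (qp k * qp (N - k))

lemma q_ne_zero : q ≠ 0 :=
  (map_ne_zero_iff _ (IsFractionRing.injective (MvPolynomial (Fin 2) ℚ) F)).mpr
    (MvPolynomial.X_ne_zero 0)

lemma a_ne_zero : a ≠ 0 :=
  (map_ne_zero_iff _ (IsFractionRing.injective (MvPolynomial (Fin 2) ℚ) F)).mpr
    (MvPolynomial.X_ne_zero 1)

lemma q_pow_ne_one {m : ℕ} (hm : m ≠ 0) : q ^ m ≠ 1 := by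
  intro h
  have hX : (MvPolynomial.X 0 : MvPolynomial (Fin 2) ℚ) ^ m = 1 :=
    IsFractionRing.injective _ F (by rw [map_pow, map_one]; exact h)
  have h2 := congrArg (MvPolynomial.eval fun _ => (2 : ℚ)) hX
  simp only [map_pow, MvPolynomial.eval_X, map_one] at h2
  exact (one_lt_pow₀ one_lt_two hm).ne' h2

lemma one_sub_q_pow_ne_zero {m : ℕ} (hm : m ≠ 0) : 1 - q ^ m ≠ 0 :=
  sub_ne_zero.mpr (q_pow_ne_one hm).symm

lemma qPoch_zero (x y : F) : qPoch x y 0 = 1 := prod_range_zero _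

lemma qPoch_succ (x y : F) (n : ℕ) :
    qPoch x y (n + 1) = qPoch x y n * (1 - x * y ^ n) := prod_range_succ _ _

lemma qp_zero : qp 0 = 1 := qPoch_zero _ _

lemma qp_succ (n : ℕ) : qp (n + 1) = qp n * (1 - q ^ (2 * (n + 1))) := by
  rw [qp, qPoch_succ, ← qp]
  ring

lemma qp_ne_zero (n : ℕ) : qp n ≠ 0 := by
  induction n with
  | zero => exact qp_zero ▸ one_ne_zero
  | succ n ih => exact qp_succ n ▸ mul_ne_zero ih (one_sub_q_pow_ne_zero (by omega))

lemma qbin_zero_right (n : ℕ) : qbin n 0 = 1 := by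
  rw [qbin, qp_zero, Nat.sub_zero, one_mul, div_self (qp_ne_zero n)]

lemma qbin_self (n : ℕ) : qbin n n = 1 := by
  rw [qbin, Nat.sub_self, qp_zero, mul_one, div_self (qp_ne_zero n)]

lemma qbin_succ_succ {n m : ℕ} (h : m < n) :
    qbin (n + 1) (m + 1) = qbin n (m + 1) + q ^ (2 * (n - m)) * qbin n m := by
  obtain ⟨s, rfl⟩ : ∃ s, n = m + 1 + s := ⟨n - m - 1, by omega⟩
  rw [qbin, qbin, qbin, show m + 1 + s + 1 - (m + 1) = s + 1 by omega,
    show m + 1 + s - (m + 1) = s by omega, show m + 1 + s - m = s + 1 by omega,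
    qp_succ (m + 1 + s), qp_succ s, qp_succ m]
  have := one_sub_q_pow_ne_zero (m := 2 * (m + 1)) (by omega)
  have := one_sub_q_pow_ne_zero (m := 2 * (s + 1)) (by omega)
  have := qp_ne_zero m
  have := qp_ne_zero s
  field_simp
  ring

lemma qbin_mul_qbin (k n i : ℕ) :
    qbin (k + i) k * qbin (k + n) (k + i) = qbin (k + n) k * qbin n i := by
  rw [qbin, qbin, qbin, qbin, Nat.add_sub_cancel_left, Nat.add_sub_cancel_left,
    Nat.add_sub_add_left]
  have := qp_ne_zero k
  have := qp_ne_zero i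
  have := qp_ne_zero (n - i)
  have := qp_ne_zero (k + i)
  have := qp_ne_zero n
  field_simp

/-- The q-Chu–Vandermonde identity in base `q²`. -/
theorem qPoch_mul_eq_sum (x y : F) (n : ℕ) :
    qPoch (x * y) (q ^ 2) n =
      ∑ i ∈ range (n + 1), qbin n i * y ^ i * qPoch x (q ^ 2) i * qPoch y (q ^ 2) (n - i) := by
  induction n with
  | zero => simp [qPoch_zero, qbin_self]
  | succ n ih =>
    let C m i := qbin m i * y ^ i * qPoch x (q ^ 2) i * qPoch y (q ^ 2) (m - i)
    let A i := qbin n i * y ^ i * qPoch x (q ^ 2) i * qPoch y (q ^ 2) (n + 1 - i)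
    let B i := q ^ (2 * (n - i)) * qbin n i * y ^ (i + 1) * qPoch x (q ^ 2) (i + 1) *
      qPoch y (q ^ 2) (n - i)
    -- `1 - x y q^{2n} = (1 - y q^{2(n-i)}) + y q^{2(n-i)} (1 - x q^{2i})`
    have hsplit : ∀ i ∈ range (n + 1), C n i * (1 - x * y * (q ^ 2) ^ n) = A i + B i := by
      intro i hi
      have hi : i ≤ n := Nat.lt_succ_iff.mp (mem_range.mp hi)
      have hpow : (q ^ 2) ^ n = q ^ (2 * (n - i)) * (q ^ 2) ^ i := by
        rw [← pow_mul, ← pow_mul, ← pow_add]; congr 1; omega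
      simp only [C, A, B, Nat.sub_add_comm hi, qPoch_succ, hpow, ← pow_mul]
      ring
    have hpascal : ∀ i ∈ range n, C (n + 1) (i + 1) = A (i + 1) + B i := by
      intro i hi
      simp only [C, A, B, qbin_succ_succ (mem_range.mp hi), Nat.add_sub_add_right]
      ring
    have htop : C (n + 1) (n + 1) = B n := by simp [C, B, qbin_self]
    have hbot : C (n + 1) 0 = A 0 := by simp [C, A, qbin_zero_right]
    show qPoch (x * y) (q ^ 2) (n + 1) = ∑ i ∈ range (n + 2), C (n + 1) i
    rw [qPoch_succ, ih, sum_mul, sum_congr rfl hsplit, sum_add_distrib, sum_range_succ' A,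
      sum_range_succ B, sum_range_succ' (C (n + 1)), sum_range_succ (fun i => C (n + 1) (i + 1)),
      sum_congr rfl hpascal, sum_add_distrib, htop, hbot]
    ring

lemma q_pow_mul_qPoch_inv_mul_qp {n i : ℕ} (hi : i ≤ n) :
    q ^ (2 * n * i) * qPoch (q ^ (2 * n))⁻¹ (q ^ 2) i * qp (n - i) =
      (-1) ^ i * q ^ (i * (i - 1)) * qp n := by
  induction i with
  | zero => simp [qPoch_zero]
  | succ i ih =>
    have hqp : qp (n - i) = qp (n - (i + 1)) * (1 - q ^ (2 * (n - i))) := by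
      simpa only [show n - (i + 1) + 1 = n - i by omega] using qp_succ (n - (i + 1))
    have hexp : (i + 1) * (i + 1 - 1) = i * (i - 1) + 2 * i := by
      cases i <;> simp only [Nat.add_sub_cancel]; ring
    have hinv : q ^ (2 * n) * (q ^ (2 * n))⁻¹ = 1 := mul_inv_cancel₀ (pow_ne_zero _ q_ne_zero)
    have hpow : q ^ (2 * n) = q ^ (2 * (n - i)) * (q ^ 2) ^ i := by
      rw [← pow_mul, ← pow_add]; congr 1; omega
    have ih := ih (by omega)
    rw [hqp] at ih
    apply mul_right_cancel₀ (one_sub_q_pow_ne_zero (m := 2 * (n - i)) (by omega))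
    rw [qPoch_succ, hexp]
    linear_combination (q ^ (2 * n) * (1 - (q ^ (2 * n))⁻¹ * (q ^ 2) ^ i)) * ih -
      ((q ^ 2) ^ i * (-1) ^ i * q ^ (i * (i - 1)) * qp n) * hinv +
      ((-1) ^ i * q ^ (i * (i - 1)) * qp n) * hpow

lemma qPoch_div_qp_eq_sum (b : F) (n : ℕ) :
    qPoch b (q ^ 2) n / qp n =
      ∑ i ∈ range (n + 1), qbin n i * (-b) ^ i * q ^ (i * (i - 1)) *
        (qPoch (b * q ^ (2 * n)) (q ^ 2) (n - i) / qp (n - i)) := by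
  have hb : (q ^ (2 * n))⁻¹ * (b * q ^ (2 * n)) = b := by field_simp [q_ne_zero]
  rw [← hb, qPoch_mul_eq_sum, sum_div, hb]
  refine sum_congr rfl fun i hi => ?_
  have key := q_pow_mul_qPoch_inv_mul_qp (Nat.lt_succ_iff.mp (mem_range.mp hi))
  have := qp_ne_zero n
  have := qp_ne_zero (n - i)
  generalize qPoch (q ^ (2 * n))⁻¹ (q ^ 2) i = X at key ⊢
  field_simp
  linear_combination (qbin n i * b ^ i * qPoch (b * q ^ (2 * n)) (q ^ 2) (n - i)) * key

lemma closure_summand_monomial (j : ℤ) (k i : ℕ) :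
    (-q) ^ (k + i) * a ^ (2 * ((k + i : ℕ) : ℤ) - j) *
        q ^ ((k : ℤ) ^ 2 - 2 * j * ((k + i : ℕ) : ℤ) + (j - ((k + i : ℕ) : ℤ)) ^ 2) =
      (-q) ^ k * a ^ (2 * (k : ℤ) - j) * q ^ (-4 * (k : ℤ) * j + 2 * (k : ℤ) ^ 2 + j ^ 2) *
        ((-(a ^ 2 * q ^ (2 - 4 * j + 2 * (k : ℤ)))) ^ i * q ^ (i * (i - 1))) := by
  have ha : a ^ (2 * ((k + i : ℕ) : ℤ) - j) = a ^ (2 * (k : ℤ) - j) * (a ^ 2) ^ i := by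
    rw [← pow_mul, ← zpow_natCast, ← zpow_add₀ a_ne_zero]
    congr 1; push_cast; ring
  have hq :
      q ^ i * q ^ ((k : ℤ) ^ 2 - 2 * j * ((k + i : ℕ) : ℤ) + (j - ((k + i : ℕ) : ℤ)) ^ 2) =
      q ^ (-4 * (k : ℤ) * j + 2 * (k : ℤ) ^ 2 + j ^ 2) * (q ^ (2 - 4 * j + 2 * (k : ℤ))) ^ i *
        q ^ (i * (i - 1)) := by
    have hcast : ((i * (i - 1) : ℕ) : ℤ) = i * (i - 1) := by
      rcases i with _ | i
      · simp
      · push_cast [Nat.add_sub_cancel]; ring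
    rw [← zpow_natCast _ i, ← zpow_natCast _ (i * (i - 1)), ← zpow_natCast, ← zpow_mul,
      ← zpow_add₀ q_ne_zero, ← zpow_add₀ q_ne_zero, ← zpow_add₀ q_ne_zero, hcast]
    congr 1; push_cast; ring
  rw [pow_add, neg_pow q i, neg_pow (a ^ 2 * _), mul_pow, ha]
  linear_combination ((-q) ^ k * (-1) ^ i * a ^ (2 * (k : ℤ) - j) * (a ^ 2) ^ i) * hq

/-- The reduced north–south closure of a top twist on `RI[j,k]` (Lemma `lemmaclosure2`):
`∑_{h=k}^{j} (−q)^h a^{2h−j} q^{k²−2jh+(j−h)²} [h;k]₊ [j;h]₊ (a²q^{2−2j};q²)_{j−h}/(q²;q²)_{j−h}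
 = (−q)^k a^{2k−j} q^{−4kj+2k²+j²} [j;k]₊ (a²q^{2−4j+2k};q²)_{j−k}/(q²;q²)_{j−k}`. -/
theorem closure_TRI (j k : ℕ) (hk : k ≤ j) :
    ∑ h ∈ Finset.Icc k j,
      (-q) ^ h * a ^ (2 * (h : ℤ) - (j : ℤ)) *
        q ^ ((k : ℤ) ^ 2 - 2 * (j : ℤ) * (h : ℤ) + ((j : ℤ) - (h : ℤ)) ^ 2) *
        qbin h k * qbin j h *
        (qPoch (a ^ 2 * q ^ (2 - 2 * (j : ℤ))) (q ^ 2) (j - h) / qp (j - h)) =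
      (-q) ^ k * a ^ (2 * (k : ℤ) - (j : ℤ)) *
        q ^ (-4 * (k : ℤ) * (j : ℤ) + 2 * (k : ℤ) ^ 2 + (j : ℤ) ^ 2) * qbin j k *
        (qPoch (a ^ 2 * q ^ (2 - 4 * (j : ℤ) + 2 * (k : ℤ))) (q ^ 2) (j - k) / qp (j - k)) := by
  obtain ⟨n, rfl⟩ := Nat.exists_eq_add_of_le hk
  set b := a ^ 2 * q ^ (2 - 4 * ((k + n : ℕ) : ℤ) + 2 * (k : ℤ))
  have hb : b * q ^ (2 * n) = a ^ 2 * q ^ (2 - 2 * ((k + n : ℕ) : ℤ)) := by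
    rw [mul_assoc, ← zpow_natCast q, ← zpow_add₀ q_ne_zero]
    congr 2; push_cast; ring
  rw [Nat.add_sub_cancel_left, qPoch_div_qp_eq_sum, hb, mul_sum, ← Ico_add_one_right_eq_Icc,
    sum_Ico_eq_sum_range, show k + n + 1 - k = n + 1 by omega]
  refine sum_congr rfl fun i _ => ?_
  rw [Nat.add_sub_add_left, closure_summand_monomial, mul_assoc _ (qbin _ k), qbin_mul_qbin]
  ring
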